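/- The poset B_{1_G}(k,n) is rank-symmetric: for each integer j, the number of elements of rank j equals the number of elements of rank k(n−1) − j. -/

import Mathlib

/-!
Complementing every coordinate, `x ↦ (n - 1 - xᵢ)ᵢ`, commutes with permuting coordinates, so it
permutes the `G`-orbits, and it sends rank `r` to rank `k(n-1) - r`. Since rank is constant on
orbits and the lexicographically least elements of the orbits represent each orbit exactly once,
"complement, then take the least element of the orbit" is an involution of `B_{1_G}(k,n)` that
reverses rank.
-/

/-- Action of a permutation on tuples: `g(x) = (x_{g⁻¹(1)},…,x_{g⁻¹(k)})`. -/
def act {k n : ℕ} (g : Equiv.Perm (Fin k)) (x : Fin k → Fin n) : Fin k → Fin n :=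
  fun i => x (g⁻¹ i)

open Finset

namespace Setoid

variable {α β : Type*} [LinearOrder β] [WellFoundedLT β] (key : α → β) (s : Setoid α)

noncomputable def classArgmin (x : α) : α :=
  Function.argminOn key {y | s x y} ⟨x, s.refl x⟩

variable {key s}

theorem rel_classArgmin (x : α) : s x (s.classArgmin key x) :=
  Function.argminOn_mem key _ _

theorem key_classArgmin_le {x y : α} (h : s x y) : key (s.classArgmin key x) ≤ key y :=
  Function.argminOn_le key {y | s x y} h

theorem classArgmin_congr {x y : α} (h : s x y) : s.classArgmin key x = s.classArgmin key y := by
  have hxy : {z | s x z} = {z | s y z} := Set.ext fun z => ⟨s.trans (s.symm h), s.trans h⟩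
  simp only [classArgmin, hxy]

theorem key_classArgmin_le_of_rel {x y : α} (h : s (s.classArgmin key x) y) :
    key (s.classArgmin key x) ≤ key y :=
  key_classArgmin_le (s.trans (rel_classArgmin x) h)

theorem classArgmin_eq_self (hkey : Function.Injective key) {x : α}
    (hx : ∀ y, s x y → key x ≤ key y) : s.classArgmin key x = x :=
  hkey (le_antisymm (key_classArgmin_le (s.refl x)) (hx _ (rel_classArgmin x)))

/-- `x ↦ classArgmin (f x)` exchanges the two sides. -/
theorem card_filter_comp_eq_of_involutive (hkey : Function.Injective key) {S : Finset α}
    (hS : ∀ x, x ∈ S ↔ ∀ y, s x y → key x ≤ key y) {f : α → α} (hf : Function.Involutive f)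
    (hfs : ∀ x y, s x y → s (f x) (f y)) {p : α → Prop} [DecidablePred p]
    (hp : ∀ x y, s x y → (p x ↔ p y)) :
    #(S.filter fun x => p (f x)) = #(S.filter p) := by
  have mem_S (x : α) : s.classArgmin key (f x) ∈ S :=
    (hS _).2 fun _ => key_classArgmin_le_of_rel
  have rel_f (x : α) : s x (f (s.classArgmin key (f x))) := by
    simpa only [hf x] using hfs _ _ (rel_classArgmin (f x))
  have inv {x : α} (hx : x ∈ S) : s.classArgmin key (f (s.classArgmin key (f x))) = x := by
    rw [← classArgmin_congr (rel_f x), classArgmin_eq_self hkey ((hS x).1 hx)]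
  refine card_bij' (fun x _ => s.classArgmin key (f x)) (fun x _ => s.classArgmin key (f x))
    (fun x hx => ?_) (fun x hx => ?_)
    (fun x hx => inv (mem_filter.1 hx).1) (fun x hx => inv (mem_filter.1 hx).1)
  · exact mem_filter.2 ⟨mem_S x, (hp _ _ (rel_classArgmin (f x))).1 (mem_filter.1 hx).2⟩
  · exact mem_filter.2 ⟨mem_S x, (hp _ _ (rel_f x)).1 (mem_filter.1 hx).2⟩

end Setoid

section CoordinatePermutation

variable {k n : ℕ}

theorem act_one (x : Fin k → Fin n) : act 1 x = x := rfl

theorem act_mul (g h : Equiv.Perm (Fin k)) (x : Fin k → Fin n) :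
    act (g * h) x = act g (act h x) := rfl

theorem act_inv_act (g : Equiv.Perm (Fin k)) (x : Fin k → Fin n) : act g⁻¹ (act g x) = x := by
  rw [← act_mul, inv_mul_cancel, act_one]

theorem act_rev_comp (g : Equiv.Perm (Fin k)) (x : Fin k → Fin n) :
    act g (Fin.rev ∘ x) = Fin.rev ∘ act g x := rfl

theorem sum_val_act (g : Equiv.Perm (Fin k)) (x : Fin k → Fin n) :
    ∑ i, (act g x i : ℕ) = ∑ i, (x i : ℕ) :=
  Equiv.sum_comp g⁻¹ fun i => (x i : ℕ)

theorem sum_val_rev_comp (x : Fin k → Fin n) :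
    ((∑ i, ((Fin.rev ∘ x) i : ℕ) : ℕ) : ℤ) = k * ((n : ℤ) - 1) - ((∑ i, (x i : ℕ) : ℕ) : ℤ) := by
  have hrev (i : Fin k) : (((x i).rev : ℕ) : ℤ) = (n : ℤ) - 1 - (x i : ℕ) := by
    have := (x i).is_lt
    rw [Fin.val_rev]
    omega
  push_cast
  simp only [Function.comp_apply, hrev, sum_sub_distrib, sum_const, card_univ, Fintype.card_fin]
  ring

def permOrbitSetoid (G : Subgroup (Equiv.Perm (Fin k))) : Setoid (Fin k → Fin n) where
  r x y := ∃ g : G, act g x = y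
  iseqv :=
    { refl := fun x => ⟨1, act_one x⟩
      symm := fun ⟨g, hg⟩ => ⟨g⁻¹, by rw [← hg]; exact act_inv_act _ _⟩
      trans := fun ⟨g, hg⟩ ⟨h, hh⟩ => ⟨h * g, by rw [← hh, ← hg]; rfl⟩ }

end CoordinatePermutation

/-- `B_{1_G}(k,n)` is rank-symmetric: for each integer `j`, the number of elements of
rank `j` equals the number of elements of rank `k(n-1) - j`, where the rank of `x` is
`Σᵢ (xᵢ - 1)`, i.e. `Σᵢ xᵢ` for `Fin n`-valued tuples. -/
theorem stmt6 (k n : ℕ) (G : Subgroup (Equiv.Perm (Fin k)))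
    (S : Finset (Fin k → Fin n))
    (hS : ∀ x, x ∈ S ↔ ∀ g : G, toLex x ≤ toLex (act (g : Equiv.Perm (Fin k)) x)) :
    ∀ j : ℤ,
      (S.filter fun x => ((∑ i, ((x i : ℕ)) : ℕ) : ℤ) = j).card =
      (S.filter fun x => ((∑ i, ((x i : ℕ)) : ℕ) : ℤ) = (k : ℤ) * ((n : ℤ) - 1) - j).card := by
  intro j
  have mem_S_iff (x : Fin k → Fin n) :
      x ∈ S ↔ ∀ y, permOrbitSetoid G x y → toLex x ≤ toLex y := by
    rw [hS]
    exact ⟨fun h _ ⟨g, hg⟩ => hg ▸ h g, fun h g => h _ ⟨g, rfl⟩⟩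
  rw [← Setoid.card_filter_comp_eq_of_involutive toLex.injective mem_S_iff
    (fun x => funext fun i => Fin.rev_rev (x i))
    (fun x y ⟨g, hg⟩ => ⟨g, by rw [act_rev_comp, hg]⟩)
    (fun x y ⟨g, hg⟩ => by rw [← hg, sum_val_act])]
  congr 1
  refine filter_congr fun x _ => ?_
  rw [sum_val_rev_comp]
  omega
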